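/- Let N ≥ 1 and r ≥ 1 be integers, let F_N(t) ∈ ℚ⟦t⟧ be the unique formal power series with F_N(t)·(e^t − T_{N−1}(t)) = t^N/N!, and set A(t) = F_N(t)^r. Then the formal derivative of A satisfies A′(t) = r · A(t) · ( −1/(N+1) − N · ∑_{n≥1} (B_{N,n+1}/(n+1)) · t^n/n! ), where B_{N,m} are the hypergeometric Bernoulli numbers, i.e. the coefficients in F_N(t) = ∑_{m≥0} B_{N,m} t^m/m!. -/

import Mathlib

/-!
With `E = ∑_{j ≥ N} X^j / j!` one has `X E' = X E + N X^N/N!`, while `P = X^N/N!` satisfies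
Euler's equation `X P' = N P`. Differentiating `F E = P`, multiplying by `X` and cancelling `E`
turns the defining equation into the Riccati equation `X F' = N F - N F² - X F`, that is
`F' = F G` with `X G = N (1 - F) - X`. The coefficients of `G` are read off from `F(0) = 1` and
`F'(0) = -1/(N+1)`, and `(F^r)' = r F^(r-1) F' = r F^r G`.
-/

open PowerSeries
open scoped Nat

namespace PowerSeries

section CommSemiring

variable {R : Type*} [CommSemiring R]

theorem derivative_pow_of_derivative_eq_mul {f g : R⟦X⟧} (h : d⁄dX R f = f * g) (r : ℕ) :
    d⁄dX R (f ^ r) = (r : R) • (f ^ r * g) := by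
  rcases r with _ | r
  · simp
  · rw [derivative_pow, h, Nat.cast_smul_eq_nsmul, nsmul_eq_mul, Nat.add_sub_cancel]
    ring

theorem X_mul_derivative_monomial (n : ℕ) (a : R) :
    X * d⁄dX R (monomial n a) = (n : R⟦X⟧) * monomial n a := by
  ext (_ | k)
  · rw [coeff_zero_X_mul, ← map_natCast C, coeff_C_mul, coeff_monomial]
    split_ifs with hn
    · simp [← hn]
    · simp
  · rw [coeff_succ_X_mul, coeff_derivative, ← map_natCast C, coeff_C_mul, coeff_monomial]
    split_ifs with hk
    · simp [← hk, mul_comm]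
    · simp

end CommSemiring

def expTail (N : ℕ) : ℚ⟦X⟧ :=
  mk fun j => if N ≤ j then (j ! : ℚ)⁻¹ else 0

theorem expTail_ne_zero (N : ℕ) : expTail N ≠ 0 := fun h => by
  simpa [expTail, Nat.factorial_ne_zero] using congrArg (coeff N) h

theorem expTail_eq_X_pow_mul (N : ℕ) :
    expTail N = X ^ N * mk fun j => ((N + j) ! : ℚ)⁻¹ := by
  ext n
  rw [coeff_X_pow_mul', expTail, coeff_mk, coeff_mk]
  split_ifs with h
  · rw [Nat.add_sub_cancel' h]
  · rfl

theorem X_mul_derivative_expTail (N : ℕ) :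
    X * d⁄dX ℚ (expTail N) = X * expTail N + (N : ℚ⟦X⟧) * monomial N (N ! : ℚ)⁻¹ := by
  ext (_ | n)
  · rw [coeff_zero_X_mul, map_add, coeff_zero_X_mul, ← map_natCast C, coeff_C_mul, coeff_monomial]
    split_ifs with hN
    · simp [← hN]
    · simp
  rw [coeff_succ_X_mul, coeff_derivative, map_add, coeff_succ_X_mul, ← map_natCast C,
    coeff_C_mul, coeff_monomial, expTail, coeff_mk, coeff_mk]
  have hfac : ((n + 1) ! : ℚ) = (n + 1) * n ! := by push_cast [Nat.factorial_succ]; ring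
  rcases lt_trichotomy N (n + 1) with h | rfl | h
  · rw [if_pos h.le, if_pos (by omega), if_neg h.ne', mul_zero, add_zero, hfac]
    field_simp
  · rw [if_pos le_rfl, if_neg (by omega), if_pos rfl, zero_add, hfac]
    push_cast
    field_simp
  · rw [if_neg (by omega), if_neg (by omega), if_neg (by omega), zero_mul, mul_zero, add_zero]

section MulExpTail

variable {N : ℕ} {F : ℚ⟦X⟧}

theorem X_mul_derivative_of_mul_expTail (hF : F * expTail N = monomial N (N ! : ℚ)⁻¹) :
    X * d⁄dX ℚ F = (N : ℚ⟦X⟧) * F - (N : ℚ⟦X⟧) * F ^ 2 - X * F := by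
  have hD := congrArg (d⁄dX ℚ) hF
  rw [Derivation.leibniz, smul_eq_mul, smul_eq_mul] at hD
  apply mul_right_cancel₀ (expTail_ne_zero N)
  linear_combination X * hD - F * X_mul_derivative_expTail N
    + X_mul_derivative_monomial N (N ! : ℚ)⁻¹ + ((N : ℚ⟦X⟧) * F - N) * hF

theorem mul_mk_eq_C_of_mul_expTail (hF : F * expTail N = monomial N (N ! : ℚ)⁻¹) :
    F * (mk fun j => ((N + j) ! : ℚ)⁻¹) = C (N ! : ℚ)⁻¹ := by
  apply X_pow_mul_cancel (k := N)
  rw [mul_left_comm, ← expTail_eq_X_pow_mul, hF, ← monomial_zero_eq_C_apply, X_pow_eq,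
    monomial_mul_monomial, add_zero, one_mul]

theorem constantCoeff_of_mul_expTail (hF : F * expTail N = monomial N (N ! : ℚ)⁻¹) :
    constantCoeff F = 1 := by
  have h := congrArg constantCoeff (mul_mk_eq_C_of_mul_expTail hF)
  rw [map_mul, constantCoeff_mk, constantCoeff_C, add_zero] at h
  simpa [Nat.factorial_ne_zero] using h

theorem coeff_one_of_mul_expTail (hF : F * expTail N = monomial N (N ! : ℚ)⁻¹) :
    coeff 1 F = -((N : ℚ) + 1)⁻¹ := by
  have h := congrArg (coeff 1) (mul_mk_eq_C_of_mul_expTail hF)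
  rw [coeff_one_mul, coeff_C, constantCoeff_of_mul_expTail hF, constantCoeff_mk, coeff_mk,
    add_zero, if_neg one_ne_zero, mul_one, Nat.factorial_succ] at h
  push_cast at h
  field_simp at h ⊢
  linear_combination h

theorem X_mul_mk_eq_of_mul_expTail (hF : F * expTail N = monomial N (N ! : ℚ)⁻¹) :
    X * mk (fun m => if m = 0 then -1 / ((N : ℚ) + 1) else -N * coeff (m + 1) F)
      = (N : ℚ⟦X⟧) - (N : ℚ⟦X⟧) * F - X := by
  ext (_ | m)
  · simp [constantCoeff_of_mul_expTail hF]
  rw [coeff_succ_X_mul, coeff_mk, ← map_natCast C]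
  rcases m with _ | m
  · simp only [map_sub, coeff_C_mul, coeff_C, coeff_X, coeff_one_of_mul_expTail hF, zero_add,
      one_ne_zero, reduceIte]
    field_simp
    ring
  · simp [-map_natCast, coeff_X]

end MulExpTail

end PowerSeries

theorem hypergeometric_bernoulli_power_derivative_general
    (N r : ℕ)
    (F : PowerSeries ℚ)
    (hF : F * (PowerSeries.mk fun j => if N ≤ j then ((j.factorial : ℚ))⁻¹ else 0)
        = PowerSeries.mk fun j => if j = N then ((N.factorial : ℚ))⁻¹ else 0)
    (B : ℕ → ℚ)
    (hB : ∀ m : ℕ, B m = (m.factorial : ℚ) * PowerSeries.coeff m F) :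
    d⁄dX ℚ (F ^ r)
      = (r : ℚ) • ((F ^ r) *
          PowerSeries.mk (fun m =>
            if m = 0 then -(1 : ℚ) / ((N : ℚ) + 1)
            else -(N : ℚ) * (B (m + 1) / ((m : ℚ) + 1)) * ((m.factorial : ℚ))⁻¹)) := by
  rw [← monomial_eq_mk] at hF
  have hBF (m : ℕ) : B (m + 1) / ((m : ℚ) + 1) * (m ! : ℚ)⁻¹ = coeff (m + 1) F := by
    rw [hB, Nat.factorial_succ]
    push_cast
    field_simp
  simp_rw [mul_assoc _ (_ / _), hBF]
  apply derivative_pow_of_derivative_eq_mul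
  apply mul_left_cancel₀ X_ne_zero
  linear_combination X_mul_derivative_of_mul_expTail hF - F * X_mul_mk_eq_of_mul_expTail hF

/-- The logarithmic-derivative identity (3.14) used in the proof of Theorem 5: with
`A(t) = F_N(t)^r`, where `F_N(t)` is the unique power series with
`F_N(t)·(e^t - T_{N-1}(t)) = t^N/N!`, one has
`A'(t) = r·A(t)·(-1/(N+1) - N·∑_{n≥1} (B_{N,n+1}/(n+1))·t^n/n!)`,
the numbers `B m = B_{N,m}` being the scaled coefficients of `F_N`. -/
theorem hypergeometric_bernoulli_power_derivative
    (N r : ℕ) (hN : 1 ≤ N) (hr : 1 ≤ r)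
    (F : PowerSeries ℚ)
    (hF : F * (PowerSeries.mk fun j => if N ≤ j then ((j.factorial : ℚ))⁻¹ else 0)
        = PowerSeries.mk fun j => if j = N then ((N.factorial : ℚ))⁻¹ else 0)
    (B : ℕ → ℚ)
    (hB : ∀ m : ℕ, B m = (m.factorial : ℚ) * PowerSeries.coeff m F) :
    d⁄dX ℚ (F ^ r)
      = (r : ℚ) • ((F ^ r) *
          PowerSeries.mk (fun m =>
            if m = 0 then -(1 : ℚ) / ((N : ℚ) + 1)
            else -(N : ℚ) * (B (m + 1) / ((m : ℚ) + 1)) * ((m.factorial : ℚ))⁻¹)) :=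
  hypergeometric_bernoulli_power_derivative_general N r F hF B hB
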